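/- Let R be a probability measure on a measurable space Ω and let P be a probability measure on Ω with P ≪ R and H(P|R) < ∞. Then H(P|R) = sup { ∫ u dP − ∫ (e^u − 1) dR : u : Ω → ℝ measurable with ∫ e^u dR < ∞ }. -/

import Mathlib

open MeasureTheory Real Filter Classical
open scoped ENNReal

/-- Relative entropy `H(P|R) ∈ [0,∞]`: the integral `∫ log(dP/dR) dP` if `P ≪ R`
(with value `+∞` when `log(dP/dR)` is not `P`-integrable), and `+∞` otherwise. -/
noncomputable def relEntropy {Ω : Type*} [MeasurableSpace Ω] (P R : Measure Ω) : EReal :=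
  if P ≪ R ∧ Integrable (llr P R) P then ((∫ ω, llr P R ω ∂P : ℝ) : EReal) else ⊤

/-!
For `s ≥ 0` the Fenchel–Young inequality `s t ≤ s log s - s + exp t` holds, with equality at
`t = log s`. Taking `s = dP/dR` and `t = u ω` and integrating against `R` bounds
`∫ u dP - ∫ (exp u - 1) dR` by `H(P|R)`. The optimizer `u = log (dP/dR)` equals `-∞` where the
density vanishes; putting `log ε` there instead gives admissible functions `u` with
`u = log (dP/dR)` `P`-a.e. and `∫ exp u dR = 1 + ε R{dP/dR = 0}`, whose value is at least
`H(P|R) - ε`.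
-/

namespace Real

theorem mul_le_mul_log_sub_add_exp {s : ℝ} (hs : 0 ≤ s) (t : ℝ) :
    s * t ≤ s * log s - s + exp t := by
  rcases hs.eq_or_lt with rfl | hs
  · simp only [zero_mul, zero_sub]
    positivity
  · have h := add_one_le_exp (t - log s)
    rw [exp_sub, exp_log hs, le_div_iff₀ hs] at h
    linarith

theorem enorm_eq_ofReal_add_ofReal_neg (x : ℝ) :
    ‖x‖ₑ = ENNReal.ofReal x + ENNReal.ofReal (-x) := by
  rcases le_total 0 x with hx | hx
  · rw [ENNReal.ofReal_of_nonpos (neg_nonpos.2 hx), add_zero, enorm_eq_ofReal hx]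
  · rw [ENNReal.ofReal_of_nonpos hx, zero_add, enorm_eq_ofReal_abs, abs_of_nonpos hx]

end Real

section ERealIntegral

variable {α : Type*} [MeasurableSpace α] {μ ν : Measure α} {f h : α → ℝ}

/-- Since `⊤ - ⊤ = ⊥` in `EReal`, this is `⊥` whenever `∫⁻ f⁻ dμ = ∞`. -/
noncomputable def erealIntegral (f : α → ℝ) (μ : Measure α) : EReal :=
  ((∫⁻ x, ENNReal.ofReal (f x) ∂μ : ℝ≥0∞) : EReal)
    - ((∫⁻ x, ENNReal.ofReal (-(f x)) ∂μ : ℝ≥0∞) : EReal)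

theorem integrable_iff_lintegral_ofReal_ne_top (hf : AEStronglyMeasurable f μ) :
    Integrable f μ ↔
      ∫⁻ x, ENNReal.ofReal (f x) ∂μ ≠ ∞ ∧ ∫⁻ x, ENNReal.ofReal (-f x) ∂μ ≠ ∞ := by
  simp_rw [Integrable, hf, true_and, HasFiniteIntegral, Real.enorm_eq_ofReal_add_ofReal_neg,
    lintegral_add_left' hf.aemeasurable.ennreal_ofReal, ENNReal.add_lt_top, lt_top_iff_ne_top]

theorem erealIntegral_eq_integral (hf : Integrable f μ) : erealIntegral f μ = ∫ x, f x ∂μ := by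
  obtain ⟨hpos, hneg⟩ := (integrable_iff_lintegral_ofReal_ne_top hf.1).1 hf
  rw [integral_eq_lintegral_pos_part_sub_lintegral_neg_part hf, EReal.coe_sub,
    EReal.coe_ennreal_toReal hpos, EReal.coe_ennreal_toReal hneg, erealIntegral]

theorem erealIntegral_le_integral (hf : AEStronglyMeasurable f μ) (hh : Integrable h μ)
    (hfh : f ≤ᵐ[μ] h) : erealIntegral f μ ≤ ∫ x, h x ∂μ := by
  by_cases hneg : ∫⁻ x, ENNReal.ofReal (-f x) ∂μ = ∞
  · simp [erealIntegral, hneg]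
  have hpos : ∫⁻ x, ENNReal.ofReal (f x) ∂μ ≠ ∞ := by
    refine ne_top_of_le_ne_top hh.2.ne ?_
    calc ∫⁻ x, ENNReal.ofReal (f x) ∂μ ≤ ∫⁻ x, ENNReal.ofReal (h x) ∂μ :=
          lintegral_mono_ae (hfh.mono fun x hx => ENNReal.ofReal_le_ofReal hx)
      _ ≤ ∫⁻ x, ‖h x‖ₑ ∂μ := lintegral_ofReal_le_lintegral_enorm h
  have hf_int := (integrable_iff_lintegral_ofReal_ne_top hf).2 ⟨hpos, hneg⟩
  rw [erealIntegral_eq_integral hf_int, EReal.coe_le_coe_iff]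
  exact integral_mono_ae hf_int hh hfh

theorem lintegral_ofReal_toReal_rnDeriv_mul [μ.HaveLebesgueDecomposition ν] [SigmaFinite μ]
    (hμν : μ ≪ ν) (hf : AEMeasurable f ν) :
    ∫⁻ x, ENNReal.ofReal ((μ.rnDeriv ν x).toReal * f x) ∂ν = ∫⁻ x, ENNReal.ofReal (f x) ∂μ := by
  rw [← lintegral_rnDeriv_mul hμν hf.ennreal_ofReal]
  refine lintegral_congr_ae ((Measure.rnDeriv_lt_top μ ν).mono fun x hx => ?_)
  dsimp only
  rw [ENNReal.ofReal_mul ENNReal.toReal_nonneg, ENNReal.ofReal_toReal hx.ne]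

theorem erealIntegral_toReal_rnDeriv_mul [μ.HaveLebesgueDecomposition ν] [SigmaFinite μ]
    (hμν : μ ≪ ν) (hf : AEMeasurable f ν) :
    erealIntegral (fun x => (μ.rnDeriv ν x).toReal * f x) ν = erealIntegral f μ := by
  simp only [erealIntegral, ← mul_neg, lintegral_ofReal_toReal_rnDeriv_mul hμν hf,
    lintegral_ofReal_toReal_rnDeriv_mul (f := fun x => -f x) hμν hf.neg]

end ERealIntegral

section Variational

variable {Ω : Type*} [MeasurableSpace Ω] {P R : Measure Ω} [IsProbabilityMeasure P]

theorem erealIntegral_le_integral_llr_sub_one_add_integral_exp [SigmaFinite R] (hPR : P ≪ R)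
    (hH : Integrable (llr P R) P) {u : Ω → ℝ} (hu : Measurable u)
    (hexp : Integrable (fun ω => exp (u ω)) R) :
    erealIntegral u P ≤ ((∫ ω, llr P R ω ∂P) - 1 + ∫ ω, exp (u ω) ∂ R : ℝ) := by
  set g : Ω → ℝ := fun ω => (P.rnDeriv R ω).toReal
  have hg : Integrable g R := Measure.integrable_toReal_rnDeriv
  have hg_log : Integrable (fun ω => g ω * log (g ω)) R :=
    (integrable_rnDeriv_mul_log_iff hPR).2 hH
  have hg_log_sub : Integrable (fun ω => g ω * log (g ω) - g ω) R := hg_log.sub hg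
  rw [← erealIntegral_toReal_rnDeriv_mul hPR hu.aemeasurable]
  calc erealIntegral (fun ω => g ω * u ω) R
      ≤ ∫ ω, (g ω * log (g ω) - g ω + exp (u ω)) ∂ R :=
        erealIntegral_le_integral (by fun_prop) (hg_log_sub.add hexp)
          (ae_of_all _ fun ω => mul_le_mul_log_sub_add_exp ENNReal.toReal_nonneg (u ω))
    _ = ((∫ ω, llr P R ω ∂P) - 1 + ∫ ω, exp (u ω) ∂ R : ℝ) := by
        rw [integral_add hg_log_sub hexp, integral_sub hg_log hg,
          integral_rnDeriv_mul_log hPR, Measure.integral_toReal_rnDeriv hPR, probReal_univ]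

theorem exists_erealIntegral_eq_integral_llr_and_integral_exp_le [IsFiniteMeasure R]
    (hPR : P ≪ R) (hH : Integrable (llr P R) P) {ε : ℝ} (hε : 0 < ε) :
    ∃ u : Ω → ℝ, Measurable u ∧ Integrable (fun ω => exp (u ω)) R ∧
      erealIntegral u P = ∫ ω, llr P R ω ∂P ∧ ∫ ω, exp (u ω) ∂ R ≤ 1 + ε * R.real Set.univ := by
  set g : Ω → ℝ := fun ω => (P.rnDeriv R ω).toReal
  have hg : Integrable g R := Measure.integrable_toReal_rnDeriv
  have hg_meas : Measurable g := (Measure.measurable_rnDeriv P R).ennreal_toReal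
  set u : Ω → ℝ := fun ω => if g ω = 0 then log ε else log (g ω)
  have hu : Measurable u :=
    Measurable.ite (measurableSet_eq_fun hg_meas measurable_const) measurable_const hg_meas.log
  have hexp_le : ∀ ω, exp (u ω) ≤ g ω + ε := by
    intro ω
    by_cases h0 : g ω = 0
    · simp [u, h0, exp_log hε]
    · simp only [u, h0, if_false]
      rw [exp_log (lt_of_le_of_ne ENNReal.toReal_nonneg (Ne.symm h0))]
      linarith
  have hbound : Integrable (fun ω => g ω + ε) R := hg.add (integrable_const ε)
  have hexp : Integrable (fun ω => exp (u ω)) R :=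
    hbound.mono' (by fun_prop) (ae_of_all _ fun ω => by
      rw [norm_of_nonneg (exp_pos _).le]; exact hexp_le ω)
  have hu_ae : u =ᵐ[P] llr P R := by
    filter_upwards [Measure.rnDeriv_pos hPR, hPR.ae_le (Measure.rnDeriv_lt_top P R)]
      with ω h0 htop
    simp [u, g, llr, ENNReal.toReal_eq_zero_iff, h0.ne', htop.ne]
  refine ⟨u, hu, hexp, ?_, ?_⟩
  · rw [erealIntegral_eq_integral (hH.congr hu_ae.symm), integral_congr_ae hu_ae]
  · calc ∫ ω, exp (u ω) ∂ R ≤ ∫ ω, (g ω + ε) ∂ R := integral_mono hexp hbound hexp_le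
      _ = 1 + ε * R.real Set.univ := by
        rw [integral_add hg (integrable_const ε), Measure.integral_toReal_rnDeriv hPR,
          integral_const, probReal_univ, smul_eq_mul, mul_comm]

end Variational

/-- For `P ≪ R` with `H(P|R) < ∞`,
`H(P|R) = sup { ∫ u dP − ∫ (e^u − 1) dR : u measurable, ∫ e^u dR < ∞ }`.
The integral `∫ u dP` is encoded in `EReal` as `∫⁻ u⁺ dP − ∫⁻ u⁻ dP` (every admissible
`u` is in fact `P`-integrable, so both parts are finite). -/
theorem relEntropy_eq_sup_integrable_exp {Ω : Type*} [MeasurableSpace Ω]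
    (P R : Measure Ω) [IsProbabilityMeasure P] [IsProbabilityMeasure R] (hPR : P ≪ R)
    (hH : relEntropy P R < ⊤) :
    relEntropy P R =
      sSup {x : EReal | ∃ u : Ω → ℝ, Measurable u ∧
        Integrable (fun ω => Real.exp (u ω)) R ∧
        x = ((∫⁻ ω, ENNReal.ofReal (u ω) ∂P : ℝ≥0∞) : EReal)
              - ((∫⁻ ω, ENNReal.ofReal (-(u ω)) ∂P : ℝ≥0∞) : EReal)
              - ((∫ ω, (Real.exp (u ω) - 1) ∂ R : ℝ) : EReal)} := by
  have hllr : Integrable (llr P R) P := by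
    by_contra h
    simp [relEntropy, h] at hH
  rw [relEntropy, if_pos ⟨hPR, hllr⟩]
  change _ = sSup {x : EReal | ∃ u : Ω → ℝ, Measurable u ∧ Integrable (fun ω => exp (u ω)) R ∧
    x = erealIntegral u P - ((∫ ω, (exp (u ω) - 1) ∂ R : ℝ) : EReal)}
  have integral_exp_sub_one {u : Ω → ℝ} (hexp : Integrable (fun ω => exp (u ω)) R) :
      ∫ ω, (exp (u ω) - 1) ∂ R = ∫ ω, exp (u ω) ∂ R - 1 := by
    rw [integral_sub hexp (integrable_const 1), integral_const, probReal_univ, one_smul]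
  refine le_antisymm ?_ (sSup_le ?_)
  · refine EReal.ge_of_forall_gt_iff_ge.1 fun z hz => ?_
    obtain ⟨u, hu, hexp, hval, hle⟩ :=
      exists_erealIntegral_eq_integral_llr_and_integral_exp_le hPR hllr
        (sub_pos.2 (EReal.coe_lt_coe_iff.1 hz))
    refine le_sSup_of_le ⟨u, hu, hexp, rfl⟩ ?_
    rw [hval, integral_exp_sub_one hexp, ← EReal.coe_sub, EReal.coe_le_coe_iff]
    rw [probReal_univ, mul_one] at hle
    linarith
  · rintro _ ⟨u, hu, hexp, rfl⟩
    rw [integral_exp_sub_one hexp, EReal.sub_le_iff_le_add (by simp) (by simp), ← EReal.coe_add]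
    refine (erealIntegral_le_integral_llr_sub_one_add_integral_exp hPR hllr hu hexp).trans_eq ?_
    congr 1
    ring
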